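/- Let G be a graph on m vertices. If the reduced cohomology group H̃^{m/2 - 1}(I(G); ℚ) is nonzero (with m even), then it is one-dimensional; moreover, it is nonzero exactly when G is a disjoint union of m/2 edges, in which case I(G) is the boundary of an m-dimensional cross-polytope (an (m/2 − 1)-dimensional sphere). -/

import Mathlib

open Finset

/-- An abstract simplicial complex on vertex type `V`, given by its set of faces
(downward closed). -/
structure SCpx (V : Type*) where
  faces : Set (Finset V)
  down : ∀ s t : Finset V, s ⊆ t → t ∈ faces → s ∈ faces

variable {V : Type*} [Fintype V] [DecidableEq V]

/-- The independence complex of a graph: faces are the independent sets. -/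
def indepCpx (G : SimpleGraph V) : SCpx V where
  faces := {s | ∀ u ∈ s, ∀ v ∈ s, ¬ G.Adj u v}
  down := fun s t hst ht u hu v hv => ht u (hst hu) v (hst hv)

/-- An enumeration of the vertices, used to fix orientation signs. -/
noncomputable def ordV (v : V) : ℕ := ((Fintype.equivFin V) v : ℕ)

/-- Reduced simplicial cochains: `cochain K d` is spanned by the faces of
cardinality `d` (so `d = 0` corresponds to the empty face, sitting in
reduced degree `-1`). -/
abbrev cochain (K : SCpx V) (d : ℕ) : Type _ :=
  {s : Finset V // s ∈ K.faces ∧ s.card = d} → ℚ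

/-- The simplicial coboundary map on reduced cochains. -/
noncomputable def delta (K : SCpx V) (d : ℕ) : cochain K d →ₗ[ℚ] cochain K (d + 1) where
  toFun f t := ∑ v ∈ t.1.attach,
    (-1 : ℚ) ^ ((t.1.filter fun w => ordV w < ordV v.1).card) *
      f ⟨t.1.erase v.1, K.down _ _ (Finset.erase_subset _ _) t.2.1, by
        simp [Finset.card_erase_of_mem v.2, t.2.2]⟩
  map_add' f g := by
    funext t
    simp only [Pi.add_apply, mul_add, Finset.sum_add_distrib]
  map_smul' c f := by
    funext t
    simp only [Pi.smul_apply, smul_eq_mul, RingHom.id_apply, Finset.mul_sum]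
    exact Finset.sum_congr rfl fun v _ => by ring

/-- The range of the previous coboundary (interpreted as `⊥` in lowest degree). -/
noncomputable def prevRange (K : SCpx V) : (d : ℕ) → Submodule ℚ (cochain K d)
  | 0 => ⊥
  | (d + 1) => LinearMap.range (delta K d)

/-- Reduced simplicial cohomology over `ℚ` in shifted indexing:
`Hq K d` is `H̃^{d-1}(K; ℚ)`. -/
abbrev Hq (K : SCpx V) (d : ℕ) :=
  ↥(LinearMap.ker (delta K d)) ⧸
    (prevRange K d).comap (LinearMap.ker (delta K d)).subtype

/-- `reducedBetti K r = dim_ℚ H̃^r(K; ℚ)`. -/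
noncomputable def reducedBetti (K : SCpx V) (r : ℤ) : ℕ :=
  if r < -1 then 0 else Module.finrank ℚ (Hq K (r + 1).toNat)

/-!
Write `I(W)` for the independence complex of `G[W]`. The relative cochains of the pair
`(I(W), I(W ∖ v))` are the cochains of the link of `v`, shifted by one, and that link is
`I(W ∖ N[v])`. So `H̃^{d-1}(I(W))` vanishes when it vanishes for the deletion and `H̃^{d-2}`
vanishes for the link; it also vanishes when `v` is isolated, since `I(W)` is then a cone.
Induction on `|W|` kills `H̃^{d-1}(I(W))` for `2d > |W|` and, when `|W| = 2k` and some vertex is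
isolated or has two neighbours, also in degree `k - 1`. If `G[W]` is a perfect matching, the
deletion is a cone and the link is a smaller matching, so the cohomology sits in degree `k - 1`;
there its dimension is, up to sign, the reduced Euler characteristic `(-1)^(k-1)` of the join of
`k` copies of `S^0`.
-/

lemma ordV_injective {α : Type*} [Fintype α] : Function.Injective (ordV (V := α)) :=
  fun _ _ h => (Fintype.equivFin α).injective (Fin.val_injective h)

/-- For `v ∈ s`, this is `(-1) ^ i` when `v` is the `i`-th element of `s` in the order `ordV`:
the sign attached to the facet `s.erase v` in `delta`. -/
noncomputable def orientSign (s : Finset V) (v : V) : ℚ :=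
  (-1) ^ (s.filter fun w => ordV w < ordV v).card

lemma orientSign_mul_self {α : Type*} [Fintype α] (s : Finset α) (v : α) :
    orientSign s v * orientSign s v = 1 := by
  rw [orientSign, ← mul_pow]
  norm_num

lemma orientSign_insert_self (s : Finset V) (v : V) :
    orientSign (insert v s) v = orientSign s v := by
  rw [orientSign, orientSign, Finset.filter_insert, if_neg (lt_irrefl _)]

lemma orientSign_singleton {α : Type*} [Fintype α] (v : α) : orientSign {v} v = 1 := by
  rw [orientSign, Finset.filter_singleton, if_neg (lt_irrefl _), Finset.card_empty, pow_zero]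

lemma orientSign_erase_of_not_lt (t : Finset V) {v w : V} (h : ¬ ordV v < ordV w) :
    orientSign (t.erase v) w = orientSign t w := by
  have hv : v ∉ t.filter fun x => ordV x < ordV w := fun hv => h (Finset.mem_filter.1 hv).2
  rw [orientSign, orientSign, Finset.filter_erase, Finset.erase_eq_of_notMem hv]

lemma orientSign_erase_self (t : Finset V) (v : V) : orientSign (t.erase v) v = orientSign t v :=
  orientSign_erase_of_not_lt t (lt_irrefl _)

lemma orientSign_erase_of_lt {t : Finset V} {v w : V} (hv : v ∈ t) (h : ordV v < ordV w) :
    orientSign (t.erase v) w = -orientSign t w := by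
  rw [orientSign, orientSign, Finset.filter_erase,
    ← Finset.card_erase_add_one (Finset.mem_filter.2 ⟨hv, h⟩), pow_succ]
  ring

lemma orientSign_mul_orientSign_erase_swap {t : Finset V} {v w : V} (hv : v ∈ t) (hw : w ∈ t)
    (hne : v ≠ w) :
    orientSign t v * orientSign (t.erase v) w = -(orientSign t w * orientSign (t.erase w) v) := by
  wlog h : ordV v < ordV w generalizing v w
  · have hwv : ordV w < ordV v :=
      lt_of_le_of_ne (not_lt.1 h) fun e => hne (ordV_injective e).symm
    linear_combination this hw hv hne.symm hwv
  rw [orientSign_erase_of_lt hv h, orientSign_erase_of_not_lt t (lt_asymm h)]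
  ring

section ExtZero

variable {α : Type*} {K : SCpx α} {d : ℕ}

open Classical in
noncomputable def extZero (f : cochain K d) (s : Finset α) : ℚ :=
  if h : s ∈ K.faces ∧ s.card = d then f ⟨s, h⟩ else 0

lemma extZero_of_mem (f : cochain K d) {s : Finset α} (hs : s ∈ K.faces) (hd : s.card = d) :
    extZero f s = f ⟨s, hs, hd⟩ :=
  dif_pos ⟨hs, hd⟩

lemma extZero_coe (f : cochain K d) (t : {s : Finset α // s ∈ K.faces ∧ s.card = d}) :
    extZero f t.1 = f t :=
  extZero_of_mem f t.2.1 t.2.2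

lemma extZero_of_not_mem (f : cochain K d) {s : Finset α} (h : ¬(s ∈ K.faces ∧ s.card = d)) :
    extZero f s = 0 :=
  dif_neg h

lemma extZero_of_card_ne (f : cochain K d) {s : Finset α} (h : s.card ≠ d) : extZero f s = 0 :=
  extZero_of_not_mem f fun hs => h hs.2

lemma extZero_sub (f g : cochain K d) (s : Finset α) :
    extZero (f - g) s = extZero f s - extZero g s := by
  unfold extZero
  split <;> simp

lemma extZero_zero (s : Finset α) : extZero (0 : cochain K d) s = 0 := by
  unfold extZero
  split <;> simp

lemma cochain_ext {f g : cochain K d} (h : ∀ s ∈ K.faces, s.card = d → extZero f s = extZero g s) :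
    f = g :=
  funext fun t => by rw [← extZero_coe f, ← extZero_coe g, h t.1 t.2.1 t.2.2]

end ExtZero

section Coboundary

variable {K : SCpx V} {d : ℕ}

lemma delta_apply (f : cochain K d) (t : {s : Finset V // s ∈ K.faces ∧ s.card = d + 1}) :
    delta K d f t = ∑ w ∈ t.1, orientSign t.1 w * extZero f (t.1.erase w) := by
  rw [← Finset.sum_attach t.1]
  refine Finset.sum_congr rfl fun w _ => ?_
  rw [extZero_of_mem f (K.down _ _ (Finset.erase_subset _ _) t.2.1)
    (by rw [Finset.card_erase_of_mem w.2, t.2.2, Nat.add_sub_cancel])]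
  rfl

lemma extZero_delta (f : cochain K d) {t : Finset V} (ht : t ∈ K.faces) (hd : t.card = d + 1) :
    extZero (delta K d f) t = ∑ w ∈ t, orientSign t w * extZero f (t.erase w) := by
  rw [extZero_of_mem _ ht hd, delta_apply]

lemma delta_delta (f : cochain K d) : delta K (d + 1) (delta K d f) = 0 := by
  funext ⟨t, ht, hd⟩
  rw [delta_apply]
  set F : V → V → ℚ := fun v w =>
    orientSign t v * (orientSign (t.erase v) w * extZero f ((t.erase v).erase w))
  have hdiag : ∀ v ∈ t, F v v = 0 := fun v hv => by
    simp only [F, Finset.erase_idem, extZero_of_card_ne f (s := t.erase v)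
      (by rw [Finset.card_erase_of_mem hv, hd]; omega), mul_zero]
  have hsummand : ∀ v ∈ t, orientSign t v * extZero (delta K d f) (t.erase v)
      = ∑ w ∈ t, F v w := by
    intro v hv
    rw [extZero_delta f (K.down _ _ (Finset.erase_subset _ _) ht)
      (by rw [Finset.card_erase_of_mem hv, hd, Nat.add_sub_cancel]), Finset.mul_sum,
      Finset.sum_erase t (hdiag v hv)]
  have hanti : ∀ v ∈ t, ∀ w ∈ t, F v w = -F w v := by
    intro v hv w hw
    obtain rfl | hne := eq_or_ne v w
    · rw [hdiag v hv, neg_zero]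
    · simp only [F, Finset.erase_right_comm (s := t) (a := v) (b := w)]
      linear_combination extZero f ((t.erase w).erase v) *
        orientSign_mul_orientSign_erase_swap hv hw hne
  rw [Finset.sum_congr rfl hsummand]
  have hswap : ∑ v ∈ t, ∑ w ∈ t, F v w = -∑ v ∈ t, ∑ w ∈ t, F v w :=
    calc ∑ v ∈ t, ∑ w ∈ t, F v w = ∑ v ∈ t, ∑ w ∈ t, -F w v :=
          Finset.sum_congr rfl fun v hv => Finset.sum_congr rfl fun w hw => hanti v hv w hw
      _ = -∑ w ∈ t, ∑ v ∈ t, F w v := by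
          rw [Finset.sum_comm]
          simp only [Finset.sum_neg_distrib]
  show _ = (0 : ℚ)
  linarith

end Coboundary

namespace SCpx

variable {α : Type*}

lemma ext {K L : SCpx α} (h : K.faces = L.faces) : K = L := by
  cases K
  cases L
  congr

def del (K : SCpx α) (v : α) : SCpx α where
  faces := {s | s ∈ K.faces ∧ v ∉ s}
  down _ _ hst ht := ⟨K.down _ _ hst ht.1, fun hv => ht.2 (hst hv)⟩

def link [DecidableEq α] (K : SCpx α) (v : α) : SCpx α where
  faces := {s | v ∉ s ∧ insert v s ∈ K.faces}
  down _ _ hst ht := ⟨fun hv => ht.1 (hst hv), K.down _ _ (Finset.insert_subset_insert v hst) ht.2⟩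

lemma mem_link_faces_erase [DecidableEq α] {K : SCpx α} {v : α} {t : Finset α}
    (ht : t ∈ K.faces) (hv : v ∈ t) : t.erase v ∈ (K.link v).faces :=
  ⟨Finset.notMem_erase v t, by rwa [Finset.insert_erase hv]⟩

end SCpx

section DelCochains

variable {α : Type*} {K : SCpx α} {m : ℕ}

def restrictDel (v : α) (f : cochain K m) : cochain (K.del v) m :=
  fun s => f ⟨s.1, s.2.1.1, s.2.2⟩

noncomputable def extendDel {v : α} (g : cochain (K.del v) m) : cochain K m :=
  fun s => extZero g s.1

lemma extZero_restrictDel {v : α} (f : cochain K m) {s : Finset α} (hv : v ∉ s) :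
    extZero (restrictDel v f) s = extZero f s := by
  by_cases hs : s ∈ K.faces ∧ s.card = m
  · rw [extZero_of_mem (K := K.del v) _ ⟨hs.1, hv⟩ hs.2, extZero_of_mem f hs.1 hs.2]
    rfl
  · rw [extZero_of_not_mem f hs,
      extZero_of_not_mem (K := K.del v) _ fun hs' => hs ⟨hs'.1.1, hs'.2⟩]

lemma extZero_extendDel {v : α} (g : cochain (K.del v) m) (s : Finset α) :
    extZero (extendDel g) s = extZero g s := by
  by_cases hs : s ∈ K.faces ∧ s.card = m
  · rw [extZero_of_mem _ hs.1 hs.2]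
    rfl
  · rw [extZero_of_not_mem _ hs, extZero_of_not_mem g fun hs' => hs ⟨hs'.1.1, hs'.2⟩]

end DelCochains

section LinkCochains

variable {K : SCpx V} {n : ℕ}

noncomputable def toLink (v : V) (f : cochain K (n + 1)) : cochain (K.link v) n :=
  fun s => orientSign s.1 v * extZero f (insert v s.1)

noncomputable def ofLink {v : V} (h : cochain (K.link v) n) : cochain K (n + 1) :=
  fun t => if v ∈ t.1 then orientSign t.1 v * extZero h (t.1.erase v) else 0

noncomputable def coneContraction (v : V) (f : cochain K (n + 1)) : cochain K n :=
  fun s => if v ∈ s.1 then 0 else orientSign s.1 v * extZero f (insert v s.1)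

lemma extZero_toLink {v : V} (f : cochain K (n + 1)) {s : Finset V} (hs : s ∈ (K.link v).faces)
    (hn : s.card = n) : extZero (toLink v f) s = orientSign s v * extZero f (insert v s) := by
  rw [extZero_of_mem _ hs hn]
  rfl

lemma extZero_ofLink {v : V} (h : cochain (K.link v) n) (t : Finset V) :
    extZero (ofLink h) t = if v ∈ t then orientSign t v * extZero h (t.erase v) else 0 := by
  by_cases ht : t ∈ K.faces ∧ t.card = n + 1
  · rw [extZero_of_mem _ ht.1 ht.2]
    rfl
  rw [extZero_of_not_mem _ ht]
  split_ifs with hv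
  · rw [extZero_of_not_mem h fun hl => ht ⟨?_, ?_⟩, mul_zero]
    · simpa [Finset.insert_erase hv] using hl.1.2
    · rw [← Finset.card_erase_add_one hv, hl.2]
  · rfl

lemma extZero_coneContraction (v : V) (f : cochain K (n + 1)) (s : Finset V) :
    extZero (coneContraction v f) s =
      if v ∈ s then 0 else orientSign s v * extZero f (insert v s) := by
  by_cases hs : s ∈ K.faces ∧ s.card = n
  · rw [extZero_of_mem _ hs.1 hs.2]
    rfl
  rw [extZero_of_not_mem _ hs]
  split_ifs with hv
  · rfl
  · rw [extZero_of_not_mem f fun hi => hs ⟨K.down _ _ (Finset.subset_insert v s) hi.1, ?_⟩,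
      mul_zero]
    rw [← add_left_inj 1, ← Finset.card_insert_of_notMem hv, hi.2]

lemma toLink_ofLink {v : V} (h : cochain (K.link v) n) : toLink v (ofLink h) = h := by
  funext ⟨s, hs, hn⟩
  rw [toLink, extZero_ofLink, if_pos (Finset.mem_insert_self v s), Finset.erase_insert hs.1,
    orientSign_insert_self, ← mul_assoc, orientSign_mul_self, one_mul, extZero_of_mem h hs hn]

lemma ofLink_toLink {v : V} (f : cochain K (n + 1)) (hf : ∀ s, v ∉ s → extZero f s = 0) :
    ofLink (toLink v f) = f := by
  funext ⟨t, ht, hn⟩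
  rw [ofLink]
  dsimp only
  split_ifs with hv
  · rw [extZero_toLink f (SCpx.mem_link_faces_erase ht hv)
      (by rw [Finset.card_erase_of_mem hv, hn, Nat.add_sub_cancel]),
      Finset.insert_erase hv, orientSign_erase_self, ← mul_assoc, orientSign_mul_self, one_mul,
      extZero_of_mem f ht hn]
  · rw [← hf t hv, extZero_of_mem f ht hn]

end LinkCochains

section LinkCoboundary

variable {K : SCpx V} {n : ℕ}

lemma extZero_delta_eq_neg_delta_toLink {v : V} (f : cochain K (n + 1))
    (hf : ∀ s, v ∉ s → extZero f s = 0) {t : Finset V} (ht : t ∈ K.faces)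
    (hn : t.card = n + 1 + 1) (hv : v ∈ t) :
    extZero (delta K (n + 1) f) t =
      -(orientSign t v * extZero (delta (K.link v) n (toLink v f)) (t.erase v)) := by
  rw [extZero_delta f ht hn, extZero_delta _ (SCpx.mem_link_faces_erase ht hv)
      (by rw [Finset.card_erase_of_mem hv, hn, Nat.add_sub_cancel]),
    ← Finset.add_sum_erase t _ hv, hf _ (Finset.notMem_erase v t), mul_zero, zero_add,
    Finset.mul_sum, ← Finset.sum_neg_distrib]
  refine Finset.sum_congr rfl fun w hw => ?_
  obtain ⟨hwv, hwt⟩ := Finset.mem_erase.1 hw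
  have hvw : v ∈ t.erase w := Finset.mem_erase.2 ⟨hwv.symm, hv⟩
  rw [Finset.erase_right_comm,
    extZero_toLink f (SCpx.mem_link_faces_erase (K.down _ _ (Finset.erase_subset w t) ht) hvw)
      (by rw [Finset.card_erase_of_mem hvw, Finset.card_erase_of_mem hwt, hn]; rfl),
    Finset.insert_erase hvw, orientSign_erase_self]
  linear_combination orientSign (t.erase w) v * extZero f (t.erase w) *
      orientSign_mul_orientSign_erase_swap hv hwt hwv.symm -
    orientSign t w * extZero f (t.erase w) * orientSign_mul_self (t.erase w) v

lemma delta_ofLink {v : V} (h : cochain (K.link v) n) :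
    delta K (n + 1) (ofLink h) = -ofLink (delta (K.link v) n h) := by
  funext ⟨t, ht, hn⟩
  rw [Pi.neg_apply]
  by_cases hv : v ∈ t
  · have hsupp : ∀ s, v ∉ s → extZero (ofLink h) s = 0 := fun s hs => by
      rw [extZero_ofLink, if_neg hs]
    rw [← extZero_coe (delta K (n + 1) (ofLink h)),
      extZero_delta_eq_neg_delta_toLink _ hsupp ht hn hv, toLink_ofLink]
    simp only [ofLink, if_pos hv]
  · rw [delta_apply, Finset.sum_eq_zero fun w hw => by
      rw [extZero_ofLink, if_neg fun hv' => hv (Finset.mem_of_mem_erase hv'), mul_zero]]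
    simp only [ofLink, if_neg hv, neg_zero]

end LinkCoboundary

/-- `Hq K d = 0`, that is `H̃^{d-1}(K; ℚ) = 0`. -/
def IsAcyclicAt (K : SCpx V) (d : ℕ) : Prop :=
  ∀ f : cochain K d, delta K d f = 0 → f ∈ prevRange K d

section Acyclicity

variable {K : SCpx V}

lemma isAcyclicAt_of_forall_card_ne {d : ℕ} (h : ∀ s ∈ K.faces, s.card ≠ d) :
    IsAcyclicAt K d := by
  intro f _
  rw [show f = 0 from funext fun s => absurd s.2.2 (h s.1 s.2.1)]
  exact Submodule.zero_mem _

lemma isAcyclicAt_zero_of_singleton_mem {w : V} (hw : {w} ∈ K.faces) : IsAcyclicAt K 0 := by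
  intro f hf
  have hempty : extZero f ∅ = 0 := by
    have h := congr_fun hf ⟨{w}, hw, Finset.card_singleton w⟩
    rwa [delta_apply, Finset.sum_singleton, Finset.erase_singleton, orientSign_singleton,
      one_mul] at h
  show f ∈ (⊥ : Submodule ℚ (cochain K 0))
  rw [Submodule.mem_bot]
  exact cochain_ext fun s _ hs => by rw [Finset.card_eq_zero.1 hs, hempty, extZero_zero]

lemma cocycle_insert {n : ℕ} {f : cochain K (n + 1)} (hf : delta K (n + 1) f = 0) {v : V}
    {t : Finset V} (ht : insert v t ∈ K.faces) (hn : t.card = n + 1) (hv : v ∉ t) :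
    orientSign t v * extZero f t +
      ∑ w ∈ t, orientSign (insert v t) w * extZero f (insert v (t.erase w)) = 0 := by
  have h := congr_fun hf ⟨insert v t, ht, by rw [Finset.card_insert_of_notMem hv, hn]⟩
  rw [delta_apply, Pi.zero_apply] at h
  refine Eq.trans ?_ h
  rw [Finset.sum_insert hv, Finset.erase_insert hv, orientSign_insert_self]
  congr 1
  refine Finset.sum_congr rfl fun w hw => ?_
  have hvw : v ≠ w := fun hvw => hv (hvw ▸ hw)
  rw [Finset.erase_insert_of_ne hvw]

lemma delta_coneContraction {v : V} (hc : ∀ s ∈ K.faces, insert v s ∈ K.faces) {n : ℕ}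
    {f : cochain K (n + 1)} (hf : delta K (n + 1) f = 0) :
    delta K n (coneContraction v f) = f := by
  funext ⟨t, ht, hn⟩
  rw [delta_apply, ← extZero_coe f]
  dsimp only
  by_cases hv : v ∈ t
  · rw [Finset.sum_eq_single_of_mem v hv fun w _ hwv => by
      rw [extZero_coneContraction, if_pos (Finset.mem_erase.2 ⟨hwv.symm, hv⟩), mul_zero]]
    rw [extZero_coneContraction, if_neg (Finset.notMem_erase v t), Finset.insert_erase hv,
      orientSign_erase_self, ← mul_assoc, orientSign_mul_self, one_mul]
  have hterm : ∀ w ∈ t, orientSign t w * extZero (coneContraction v f) (t.erase w) =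
      -(orientSign t v * (orientSign (insert v t) w * extZero f (insert v (t.erase w)))) := by
    intro w hw
    have hvw : v ≠ w := fun hvw => hv (hvw ▸ hw)
    have hswap := orientSign_mul_orientSign_erase_swap (Finset.mem_insert_self v t)
      (Finset.mem_insert_of_mem hw) hvw
    rw [Finset.erase_insert hv, orientSign_insert_self, Finset.erase_insert_of_ne hvw,
      orientSign_insert_self] at hswap
    rw [extZero_coneContraction, if_neg fun h => hv (Finset.mem_of_mem_erase h)]
    set X := extZero f (insert v (t.erase w))
    linear_combination orientSign t v * orientSign (t.erase w) v * X * hswap -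
      orientSign t w * orientSign (t.erase w) v * X * orientSign_mul_self t v -
      orientSign t v * orientSign (insert v t) w * X * orientSign_mul_self (t.erase w) v
  rw [Finset.sum_congr rfl hterm, Finset.sum_neg_distrib, ← Finset.mul_sum]
  linear_combination -orientSign t v * cocycle_insert hf (hc t ht) hn hv +
    extZero f t * orientSign_mul_self t v

lemma isAcyclicAt_succ_of_cone {v : V} (hc : ∀ s ∈ K.faces, insert v s ∈ K.faces) (n : ℕ) :
    IsAcyclicAt K (n + 1) :=
  fun f hf => ⟨coneContraction v f, delta_coneContraction hc hf⟩

end Acyclicity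

section DelLink

variable {K : SCpx V} {v : V}

lemma delta_restrictDel {m : ℕ} (f : cochain K m) :
    delta (K.del v) m (restrictDel v f) = restrictDel v (delta K m f) := by
  funext ⟨t, ht, hn⟩
  rw [delta_apply]
  refine (Finset.sum_congr rfl fun w _ => ?_).trans (delta_apply f ⟨t, ht.1, hn⟩).symm
  rw [extZero_restrictDel f fun hv => ht.2 (Finset.mem_of_mem_erase hv)]

lemma extZero_delta_extendDel {m : ℕ} (g : cochain (K.del v) m) {s : Finset V} (hv : v ∉ s) :
    extZero (delta K m (extendDel g)) s = extZero (delta (K.del v) m g) s := by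
  by_cases hs : s ∈ K.faces ∧ s.card = m + 1
  · rw [extZero_delta _ hs.1 hs.2, extZero_delta (K := K.del v) _ ⟨hs.1, hv⟩ hs.2]
    simp only [extZero_extendDel]
  · rw [extZero_of_not_mem _ hs,
      extZero_of_not_mem (K := K.del v) _ fun hs' => hs ⟨hs'.1.1, hs'.2⟩]

lemma delta_toLink_eq_zero {n : ℕ} {f : cochain K (n + 1)} (hf : ∀ s, v ∉ s → extZero f s = 0)
    (hcocycle : delta K (n + 1) f = 0) : delta (K.link v) n (toLink v f) = 0 := by
  refine cochain_ext fun s hs hn => ?_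
  have h := extZero_delta_eq_neg_delta_toLink f hf hs.2
    (by rw [Finset.card_insert_of_notMem hs.1, hn]) (Finset.mem_insert_self v s)
  rw [hcocycle, extZero_zero, Finset.erase_insert hs.1, eq_comm, neg_eq_zero,
    mul_eq_zero] at h
  rw [extZero_zero]
  exact h.resolve_left (pow_ne_zero _ (by norm_num))

lemma exists_delta_eq_neg_of_toLink_mem {e : ℕ} {f : cochain K (e + 1)}
    (hf : ∀ s, v ∉ s → extZero f s = 0) (hlink : toLink v f ∈ prevRange (K.link v) e) :
    ∃ p : cochain K e, delta K e p = -f := by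
  cases e with
  | zero =>
    refine ⟨0, ?_⟩
    rw [map_zero, eq_comm, neg_eq_zero, ← ofLink_toLink f hf, (Submodule.mem_bot ℚ).1 hlink]
    exact cochain_ext fun t _ _ => by
      rw [extZero_ofLink, extZero_zero, extZero_zero, mul_zero, ite_self]
  | succ e =>
    obtain ⟨h, hh⟩ := hlink
    exact ⟨ofLink h, by rw [delta_ofLink, hh, ofLink_toLink f hf]⟩

/-- The segment `H̃^{e-1}(lk v) → H̃^e(K) → H̃^e(K ∖ v)` of the long exact sequence of the
pair `(K, K ∖ v)`, whose relative cochains are the link cochains shifted by one. -/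
theorem isAcyclicAt_succ_of_del_of_link {e : ℕ} (hdel : IsAcyclicAt (K.del v) (e + 1))
    (hlink : IsAcyclicAt (K.link v) e) : IsAcyclicAt K (e + 1) := by
  intro f hf
  obtain ⟨g, hg⟩ : ∃ g, delta (K.del v) e g = restrictDel v f :=
    hdel _ (by rw [delta_restrictDel, hf]; rfl)
  set f' := f - delta K e (extendDel g)
  have hsupp : ∀ s, v ∉ s → extZero f' s = 0 := fun s hv => by
    rw [extZero_sub, extZero_delta_extendDel g hv, hg, extZero_restrictDel f hv, sub_self]
  have hf' : delta K (e + 1) f' = 0 := by rw [map_sub, hf, delta_delta, sub_zero]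
  obtain ⟨p, hp⟩ := exists_delta_eq_neg_of_toLink_mem hsupp
    (hlink _ (delta_toLink_eq_zero hsupp hf'))
  exact ⟨extendDel g - p, by rw [map_sub, hp, sub_neg_eq_add]; exact add_sub_cancel _ _⟩

end DelLink

section Euler

variable (K : SCpx V)

lemma prevRange_le_ker (d : ℕ) : prevRange K d ≤ LinearMap.ker (delta K d) := by
  cases d with
  | zero => exact bot_le
  | succ d =>
    rintro _ ⟨f, rfl⟩
    exact delta_delta f

lemma finrank_Hq_eq_zero_iff (d : ℕ) : Module.finrank ℚ (Hq K d) = 0 ↔ IsAcyclicAt K d := by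
  rw [Module.finrank_zero_iff, Submodule.Quotient.subsingleton_iff,
    Submodule.comap_subtype_eq_top]
  exact ⟨fun h f hf => h (LinearMap.mem_ker.2 hf), fun h f hf => h f (LinearMap.mem_ker.1 hf)⟩

lemma finrank_Hq_add_finrank_prevRange (d : ℕ) :
    Module.finrank ℚ (Hq K d) + Module.finrank ℚ (prevRange K d) =
      Module.finrank ℚ (LinearMap.ker (delta K d)) := by
  rw [← (Submodule.comapSubtypeEquivOfLe (prevRange_le_ker K d)).finrank_eq]
  exact Submodule.finrank_quotient_add_finrank _

lemma finrank_Hq_add_finrank_prevRange_add_finrank_range (d : ℕ) :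
    Module.finrank ℚ (Hq K d) + Module.finrank ℚ (prevRange K d) +
      Module.finrank ℚ (LinearMap.range (delta K d)) = Module.finrank ℚ (cochain K d) := by
  rw [finrank_Hq_add_finrank_prevRange, add_comm, LinearMap.finrank_range_add_finrank_ker]

open Classical in
lemma finrank_cochain {α : Type*} [Fintype α] (K : SCpx α) (d : ℕ) :
    Module.finrank ℚ (cochain K d) = #{s | s ∈ K.faces ∧ s.card = d} := by
  rw [Module.finrank_fintype_fun_eq_card, Fintype.card_subtype]

lemma finrank_cochain_eq_zero {α : Type*} [Fintype α] (K : SCpx α) {d : ℕ}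
    (hd : Fintype.card α < d) : Module.finrank ℚ (cochain K d) = 0 := by
  classical
  rw [finrank_cochain, Finset.card_eq_zero, Finset.filter_eq_empty_iff]
  exact fun s _ hs => (Finset.card_le_univ s).not_gt (hs.2 ▸ hd)

open Classical in
/-- `-χ̃(K)`, the negated reduced Euler characteristic (the empty face counts with sign `+1`). -/
noncomputable def eulerSum : ℤ := ∑ s with s ∈ K.faces, (-1) ^ s.card

lemma sum_neg_one_pow_finrank_cochain {α : Type*} [Fintype α] (K : SCpx α) :
    ∑ d ∈ Finset.range (Fintype.card α + 2), (-1 : ℤ) ^ d * Module.finrank ℚ (cochain K d) =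
      eulerSum K := by
  classical
  have hcard : ∀ s ∈ ({s | s ∈ K.faces} : Finset (Finset α)),
      s.card ∈ Finset.range (Fintype.card α + 2) := fun s _ =>
    Finset.mem_range.2 (by have := Finset.card_le_univ s; omega)
  rw [eulerSum, ← Finset.sum_fiberwise_of_maps_to hcard]
  refine Finset.sum_congr rfl fun d _ => ?_
  rw [finrank_cochain, Finset.filter_filter, Finset.sum_congr rfl fun s hs => by
    rw [(Finset.mem_filter.1 hs).2.2], Finset.sum_const, nsmul_eq_mul, mul_comm]

lemma sum_neg_one_pow_finrank_Hq :
    ∑ d ∈ Finset.range (Fintype.card V + 2), (-1 : ℤ) ^ d * Module.finrank ℚ (Hq K d) =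
      eulerSum K := by
  rw [← sum_neg_one_pow_finrank_cochain]
  set p : ℕ → ℤ := fun d => (-1) ^ d * Module.finrank ℚ (prevRange K d)
  -- the boundary terms telescope, since `prevRange K (d + 1)` is the range of `delta K d`
  have hdeg : ∀ d, (-1 : ℤ) ^ d * Module.finrank ℚ (Hq K d) =
      (-1) ^ d * Module.finrank ℚ (cochain K d) - (p d - p (d + 1)) := fun d => by
    have hp : Module.finrank ℚ (prevRange K (d + 1)) =
        Module.finrank ℚ (LinearMap.range (delta K d)) := rfl
    simp only [p, pow_succ]
    rw [hp, ← finrank_Hq_add_finrank_prevRange_add_finrank_range K d]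
    push_cast
    ring
  have hp0 : p 0 = 0 := by
    simp only [p]
    rw [show prevRange K 0 = ⊥ from rfl, finrank_bot, Nat.cast_zero, mul_zero]
  have hptop : p (Fintype.card V + 2) = 0 := by
    have hle := (Submodule.finrank_le (prevRange K (Fintype.card V + 2))).trans_eq
      (finrank_cochain_eq_zero K (by omega))
    simp only [p, Nat.le_zero.1 hle, Nat.cast_zero, mul_zero]
  rw [Finset.sum_congr rfl fun d _ => hdeg d, Finset.sum_sub_distrib, Finset.sum_range_sub',
    hp0, hptop, sub_zero, sub_zero]

lemma eulerSum_eq_eulerSum_del_sub_eulerSum_link (v : V) :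
    eulerSum K = eulerSum (K.del v) - eulerSum (K.link v) := by
  classical
  rw [eulerSum, ← Finset.sum_filter_not_add_sum_filter _ (v ∈ ·), sub_eq_add_neg]
  congr 1
  · refine Finset.sum_congr (Finset.ext fun s => ?_) fun _ _ => rfl
    simp only [Finset.mem_filter, Finset.mem_univ, true_and]
    rfl
  · rw [eulerSum, ← Finset.sum_neg_distrib]
    refine Finset.sum_nbij' (fun s => s.erase v) (insert v) (fun s hs => ?_) (fun s hs => ?_)
      (fun s hs => ?_) (fun s hs => ?_) (fun s hs => ?_) <;>
      simp only [Finset.mem_filter, Finset.mem_univ, true_and] at hs ⊢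
    · exact SCpx.mem_link_faces_erase hs.1 hs.2
    · exact ⟨hs.2, Finset.mem_insert_self v s⟩
    · exact Finset.insert_erase hs.2
    · exact Finset.erase_insert hs.1
    · rw [← Finset.card_erase_add_one hs.2, pow_succ]
      ring

lemma link_eq_del_of_cone {α : Type*} [DecidableEq α] (K : SCpx α) {v : α}
    (hc : ∀ s ∈ K.faces, insert v s ∈ K.faces) :
    K.link v = K.del v :=
  SCpx.ext <| Set.ext fun s =>
    ⟨fun h => ⟨K.down _ _ (Finset.subset_insert v s) h.2, h.1⟩, fun h => ⟨h.2, hc s h.1⟩⟩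

lemma eulerSum_eq_zero_of_cone {v : V} (hc : ∀ s ∈ K.faces, insert v s ∈ K.faces) :
    eulerSum K = 0 := by
  rw [eulerSum_eq_eulerSum_del_sub_eulerSum_link K v, link_eq_del_of_cone K hc, sub_self]

end Euler

section IndepCpxOn

variable {α : Type*} (G : SimpleGraph α)

/-- The independence complex of the induced subgraph `G[W]`, on the ambient vertex type. -/
def indepCpxOn (W : Finset α) : SCpx α where
  faces := {s | s ⊆ W ∧ s ∈ (indepCpx G).faces}
  down _ _ hst ht := ⟨hst.trans ht.1, (indepCpx G).down _ _ hst ht.2⟩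

variable {G}

lemma insert_mem_indepCpx_faces [DecidableEq α] {s : Finset α} {v : α}
    (hs : s ∈ (indepCpx G).faces) (hv : ∀ x ∈ s, ¬G.Adj v x) :
    insert v s ∈ (indepCpx G).faces := by
  intro a ha b hb
  rcases Finset.mem_insert.1 ha with rfl | has
  · rcases Finset.mem_insert.1 hb with rfl | hbs
    · exact G.irrefl
    · exact hv b hbs
  · rcases Finset.mem_insert.1 hb with rfl | hbs
    · exact fun hab => hv a has hab.symm
    · exact hs a has b hbs

variable (G)

lemma indepCpxOn_univ [Fintype α] : indepCpxOn G Finset.univ = indepCpx G :=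
  SCpx.ext <| Set.ext fun _ => ⟨And.right, fun hs => ⟨Finset.subset_univ _, hs⟩⟩

lemma eulerSum_indepCpxOn_empty [Fintype α] : eulerSum (indepCpxOn G ∅) = 1 := by
  classical
  have hfaces : ({s | s ∈ (indepCpxOn G ∅).faces} : Finset (Finset α)) = {∅} :=
    Finset.ext fun s => by
      simp only [Finset.mem_filter, Finset.mem_univ, true_and, Finset.mem_singleton]
      refine ⟨fun hs => Finset.subset_empty.1 hs.1, ?_⟩
      rintro rfl
      exact ⟨Finset.empty_subset _, fun a ha => absurd ha (Finset.notMem_empty a)⟩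
  rw [eulerSum, hfaces, Finset.sum_singleton, Finset.card_empty, pow_zero]

variable [DecidableEq α]

lemma del_indepCpxOn (W : Finset α) (v : α) :
    (indepCpxOn G W).del v = indepCpxOn G (W.erase v) :=
  SCpx.ext <| Set.ext fun s => by
    change (s ⊆ W ∧ _) ∧ v ∉ s ↔ s ⊆ W.erase v ∧ _
    rw [Finset.subset_erase]
    tauto

lemma link_indepCpxOn [DecidableRel G.Adj] {W : Finset α} {v : α} (hv : v ∈ W) :
    (indepCpxOn G W).link v = indepCpxOn G {x ∈ W.erase v | ¬G.Adj v x} := by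
  refine SCpx.ext <| Set.ext fun s => ⟨fun ⟨hvs, hsW, hind⟩ => ⟨fun x hx => ?_, ?_⟩,
    fun ⟨hsW, hind⟩ => ⟨fun hvs => ?_, ?_, ?_⟩⟩
  · have hxv : x ≠ v := fun hxv => hvs (hxv ▸ hx)
    exact Finset.mem_filter.2 ⟨Finset.mem_erase.2 ⟨hxv, hsW (Finset.mem_insert_of_mem hx)⟩,
      hind v (Finset.mem_insert_self v s) x (Finset.mem_insert_of_mem hx)⟩
  · exact (indepCpx G).down _ _ (Finset.subset_insert v s) hind
  · exact Finset.notMem_erase v W (Finset.mem_filter.1 (hsW hvs)).1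
  · exact Finset.insert_subset hv fun x hx =>
      Finset.mem_of_mem_erase (Finset.mem_filter.1 (hsW hx)).1
  · exact insert_mem_indepCpx_faces hind fun x hx => (Finset.mem_filter.1 (hsW hx)).2

lemma insert_mem_indepCpxOn {W : Finset α} {v : α} (hv : v ∈ W) (hiso : ∀ x ∈ W, ¬G.Adj v x) :
    ∀ s ∈ (indepCpxOn G W).faces, insert v s ∈ (indepCpxOn G W).faces := fun _ hs =>
  ⟨Finset.insert_subset hv hs.1, insert_mem_indepCpx_faces hs.2 fun x hx => hiso x (hs.1 hx)⟩

end IndepCpxOn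

def IsPerfectMatchingOn {α : Type*} (G : SimpleGraph α) (W : Finset α) : Prop :=
  ∀ v ∈ W, ∃! u, u ∈ W ∧ G.Adj v u

namespace IsPerfectMatchingOn

variable {α : Type*} {G : SimpleGraph α} {W : Finset α}

lemma eq_of_adj (h : IsPerfectMatchingOn G W) {v u x : α} (hv : v ∈ W) (hu : u ∈ W)
    (hx : x ∈ W) (hvu : G.Adj v u) (hvx : G.Adj v x) : x = u :=
  (h v hv).unique ⟨hx, hvx⟩ ⟨hu, hvu⟩

lemma exists_partner [DecidableEq α] [DecidableRel G.Adj] (h : IsPerfectMatchingOn G W) {v : α}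
    (hv : v ∈ W) :
    ∃ u ∈ W.erase v, (∀ x ∈ W.erase v, ¬G.Adj u x) ∧
      {x ∈ W.erase v | ¬G.Adj v x} = (W.erase v).erase u ∧
      IsPerfectMatchingOn G ((W.erase v).erase u) := by
  obtain ⟨u, ⟨hu, hvu⟩, -⟩ := h v hv
  have hu' : u ∈ W.erase v := Finset.mem_erase.2 ⟨hvu.ne', hu⟩
  have huv : ∀ x ∈ W, G.Adj u x → x = v := fun x hx hux =>
    h.eq_of_adj hu hv hx hvu.symm hux
  refine ⟨u, hu', fun x hx hux =>
    Finset.ne_of_mem_erase hx (huv x (Finset.mem_of_mem_erase hx) hux), Finset.ext fun x => ?_,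
    fun w hw => ?_⟩
  · simp only [Finset.mem_filter, Finset.mem_erase]
    exact ⟨fun ⟨⟨hxv, hx⟩, hvx⟩ => ⟨fun hxu => hvx (hxu ▸ hvu), hxv, hx⟩,
      fun ⟨hxu, hxv, hx⟩ => ⟨⟨hxv, hx⟩, fun hvx => hxu (h.eq_of_adj hv hu hx hvu hvx)⟩⟩
  · obtain ⟨hwu, hwv, hw⟩ : w ≠ u ∧ w ≠ v ∧ w ∈ W := by simpa using hw
    obtain ⟨x, ⟨hx, hwx⟩, hxuniq⟩ := h w hw
    have hxv : x ≠ v := fun hxv => hwu (h.eq_of_adj hv hu hw hvu (hxv ▸ hwx.symm))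
    have hxu : x ≠ u := fun hxu => hwv (huv w hw (hxu ▸ hwx.symm))
    exact ⟨x, ⟨by simp [hxu, hxv, hx], hwx⟩,
      fun y hy => hxuniq y ⟨Finset.mem_of_mem_erase (Finset.mem_of_mem_erase hy.1), hy.2⟩⟩

end IsPerfectMatchingOn

section Window

variable (G : SimpleGraph V)

lemma isAcyclicAt_indepCpxOn_succ [DecidableRel G.Adj] {W : Finset V} {v : V} (hv : v ∈ W)
    {e : ℕ} (hdel : IsAcyclicAt (indepCpxOn G (W.erase v)) (e + 1))
    (hlink : IsAcyclicAt (indepCpxOn G {x ∈ W.erase v | ¬G.Adj v x}) e) :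
    IsAcyclicAt (indepCpxOn G W) (e + 1) :=
  isAcyclicAt_succ_of_del_of_link (v := v) (by rwa [del_indepCpxOn])
    (by rwa [link_indepCpxOn G hv])

/-- At a non-isolated vertex `v`, the deletion loses one vertex and the link at least two. -/
theorem isAcyclicAt_indepCpxOn_of_card_lt (W : Finset V) {d : ℕ} (hW : W.card < 2 * d) :
    IsAcyclicAt (indepCpxOn G W) d := by
  classical
  induction W using Finset.strongInduction generalizing d with
  | H W ih =>
  obtain _ | e := d
  · omega
  obtain rfl | ⟨v, hv⟩ := W.eq_empty_or_nonempty
  · exact isAcyclicAt_of_forall_card_ne fun s hs => by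
      rw [Finset.subset_empty.1 hs.1, Finset.card_empty]
      omega
  by_cases hiso : ∀ x ∈ W, ¬G.Adj v x
  · exact isAcyclicAt_succ_of_cone (insert_mem_indepCpxOn G hv hiso) e
  obtain ⟨u, hu, hvu⟩ : ∃ u ∈ W, G.Adj v u := by simpa using hiso
  have hu' : u ∈ W.erase v := Finset.mem_erase.2 ⟨hvu.ne', hu⟩
  have hlink : {x ∈ W.erase v | ¬G.Adj v x} ⊆ (W.erase v).erase u := fun x hx => by
    obtain ⟨hx, hvx⟩ := Finset.mem_filter.1 hx
    exact Finset.mem_erase.2 ⟨fun hxu => hvx (hxu ▸ hvu), hx⟩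
  have hcard_v := Finset.card_erase_add_one hv
  have hcard_u := Finset.card_erase_add_one hu'
  have hcard_link := Finset.card_le_card hlink
  exact isAcyclicAt_indepCpxOn_succ G hv (ih _ (Finset.erase_ssubset hv) (by omega))
    (ih _ ((Finset.filter_subset _ _).trans_ssubset (Finset.erase_ssubset hv)) (by omega))

/-- Some vertex `v` is isolated in `W` (a cone point) or has two neighbours, and then the link of
`v` has at most `|W| - 3` vertices. -/
theorem isAcyclicAt_indepCpxOn_of_not_perfect {k : ℕ} {W : Finset V} (hW : W.card = 2 * k)
    (h : ¬IsPerfectMatchingOn G W) : IsAcyclicAt (indepCpxOn G W) k := by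
  classical
  obtain ⟨v, hv, hnotuniq⟩ : ∃ v ∈ W, ¬∃! u, u ∈ W ∧ G.Adj v u := by
    simpa [IsPerfectMatchingOn] using h
  obtain _ | e := k
  · exact absurd hW (Finset.card_ne_zero_of_mem hv)
  by_cases hiso : ∀ x ∈ W, ¬G.Adj v x
  · exact isAcyclicAt_succ_of_cone (insert_mem_indepCpxOn G hv hiso) e
  obtain ⟨u, hu, hvu⟩ : ∃ u ∈ W, G.Adj v u := by simpa using hiso
  obtain ⟨u', hu', hvu', hu'u⟩ : ∃ u' ∈ W, G.Adj v u' ∧ u' ≠ u := by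
    by_contra! hno
    exact hnotuniq ⟨u, ⟨hu, hvu⟩, fun y hy => hno y hy.1 hy.2⟩
  have hu₁ : u ∈ W.erase v := Finset.mem_erase.2 ⟨hvu.ne', hu⟩
  have hu₂ : u' ∈ (W.erase v).erase u := by simp [hu'u, hvu'.ne', hu']
  have hlink : {x ∈ W.erase v | ¬G.Adj v x} ⊆ ((W.erase v).erase u).erase u' := fun x hx => by
    obtain ⟨hx, hvx⟩ := Finset.mem_filter.1 hx
    simp only [Finset.mem_erase] at hx ⊢
    exact ⟨fun hxu' => hvx (hxu' ▸ hvu'), fun hxu => hvx (hxu ▸ hvu), hx⟩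
  have hcard_v := Finset.card_erase_add_one hv
  have hcard_u := Finset.card_erase_add_one hu₁
  have hcard_u' := Finset.card_erase_add_one hu₂
  have hcard_link := Finset.card_le_card hlink
  exact isAcyclicAt_indepCpxOn_succ G hv (isAcyclicAt_indepCpxOn_of_card_lt G _ (by omega))
    (isAcyclicAt_indepCpxOn_of_card_lt G _ (by omega))

theorem isAcyclicAt_indepCpxOn_of_perfect {k : ℕ} {W : Finset V} (hW : W.card = 2 * k)
    (h : IsPerfectMatchingOn G W) {d : ℕ} (hd : d ≠ k) : IsAcyclicAt (indepCpxOn G W) d := by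
  classical
  induction k generalizing W d with
  | zero =>
    obtain rfl : W = ∅ := Finset.card_eq_zero.1 hW
    exact isAcyclicAt_of_forall_card_ne fun s hs => by
      rw [Finset.subset_empty.1 hs.1, Finset.card_empty]
      exact hd.symm
  | succ k ih =>
    obtain ⟨v, hv⟩ := Finset.card_pos.1 (show 0 < W.card by omega)
    obtain ⟨u, hu, hiso, hlink, hPM⟩ := h.exists_partner hv
    obtain _ | e := d
    · refine isAcyclicAt_zero_of_singleton_mem (w := v)
        ⟨Finset.singleton_subset_iff.2 hv, fun a ha b hb => ?_⟩
      rw [Finset.mem_singleton.1 ha, Finset.mem_singleton.1 hb]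
      exact G.irrefl
    have hcard_v := Finset.card_erase_add_one hv
    have hcard_u := Finset.card_erase_add_one hu
    refine isAcyclicAt_indepCpxOn_succ G hv
      (isAcyclicAt_succ_of_cone (insert_mem_indepCpxOn G hu hiso) e) ?_
    rw [hlink]
    exact ih (by omega) hPM (by omega)

theorem eulerSum_indepCpxOn_of_perfect {k : ℕ} {W : Finset V} (hW : W.card = 2 * k)
    (h : IsPerfectMatchingOn G W) : eulerSum (indepCpxOn G W) = (-1) ^ k := by
  classical
  induction k generalizing W with
  | zero =>
    rw [Finset.card_eq_zero.1 hW, eulerSum_indepCpxOn_empty, pow_zero]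
  | succ k ih =>
    obtain ⟨v, hv⟩ := Finset.card_pos.1 (show 0 < W.card by omega)
    obtain ⟨u, hu, hiso, hlink, hPM⟩ := h.exists_partner hv
    have hcard_v := Finset.card_erase_add_one hv
    have hcard_u := Finset.card_erase_add_one hu
    rw [eulerSum_eq_eulerSum_del_sub_eulerSum_link _ v, del_indepCpxOn,
      link_indepCpxOn G hv, hlink, eulerSum_eq_zero_of_cone _ (insert_mem_indepCpxOn G hu hiso),
      ih (by omega) hPM, pow_succ]
    ring

theorem finrank_Hq_indepCpxOn_of_perfect {k : ℕ} {W : Finset V} (hW : W.card = 2 * k)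
    (h : IsPerfectMatchingOn G W) : Module.finrank ℚ (Hq (indepCpxOn G W) k) = 1 := by
  have heuler := sum_neg_one_pow_finrank_Hq (indepCpxOn G W)
  have hk : k ∈ Finset.range (Fintype.card V + 2) :=
    Finset.mem_range.2 (by have := Finset.card_le_univ W; omega)
  rw [Finset.sum_eq_single_of_mem k hk fun d _ hd => by
      rw [(finrank_Hq_eq_zero_iff _ d).2 (isAcyclicAt_indepCpxOn_of_perfect G hW h hd),
        Nat.cast_zero, mul_zero],
    eulerSum_indepCpxOn_of_perfect G hW h] at heuler
  have hunit : ((-1 : ℤ) ^ k) ≠ 0 := pow_ne_zero _ (by norm_num)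
  exact_mod_cast mul_left_cancel₀ hunit (heuler.trans (mul_one _).symm)

end Window

lemma reducedBetti_eq_finrank_Hq (K : SCpx V) {r : ℤ} (hr : -1 ≤ r) :
    reducedBetti K r = Module.finrank ℚ (Hq K (r + 1).toNat) :=
  if_neg (not_lt.2 hr)

/-- Let `G` have `m = 2k` vertices. Then `H̃^{m/2-1}(I(G); ℚ)`,
if nonzero, is one-dimensional (and then `I(G)` has the reduced cohomology of a
sphere `S^{m/2-1}`, the boundary of a cross-polytope); moreover it is nonzero
exactly when `G` is a disjoint union of `m/2` edges (a perfect matching). -/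
theorem stmt3 (G : SimpleGraph V) (k : ℕ) (hm : Fintype.card V = 2 * k) :
    (reducedBetti (indepCpx G) ((k : ℤ) - 1) ≠ 0 →
      reducedBetti (indepCpx G) ((k : ℤ) - 1) = 1 ∧
      ∀ r : ℤ, r ≠ (k : ℤ) - 1 → reducedBetti (indepCpx G) r = 0) ∧
    (reducedBetti (indepCpx G) ((k : ℤ) - 1) ≠ 0 ↔ ∀ v : V, ∃! u, G.Adj v u) := by
  rw [← indepCpxOn_univ]
  have hcard : (Finset.univ : Finset V).card = 2 * k := hm
  have hmiddle : reducedBetti (indepCpxOn G Finset.univ) ((k : ℤ) - 1) =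
      Module.finrank ℚ (Hq (indepCpxOn G Finset.univ) k) := by
    rw [reducedBetti_eq_finrank_Hq _ (by omega), show ((k : ℤ) - 1 + 1).toNat = k by omega]
  have hperfect : reducedBetti (indepCpxOn G Finset.univ) ((k : ℤ) - 1) ≠ 0 ↔
      IsPerfectMatchingOn G Finset.univ := by
    rw [hmiddle]
    refine ⟨fun hne => by_contra fun hPM => hne ((finrank_Hq_eq_zero_iff _ _).2
      (isAcyclicAt_indepCpxOn_of_not_perfect G hcard hPM)), fun hPM => ?_⟩
    rw [finrank_Hq_indepCpxOn_of_perfect G hcard hPM]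
    exact one_ne_zero
  refine ⟨fun hne => ⟨?_, fun r hr => ?_⟩, hperfect.trans (by simp [IsPerfectMatchingOn])⟩
  · rw [hmiddle, finrank_Hq_indepCpxOn_of_perfect G hcard (hperfect.1 hne)]
  · obtain hr' | hr' := lt_or_ge r (-1)
    · exact if_pos hr'
    rw [reducedBetti_eq_finrank_Hq _ hr', finrank_Hq_eq_zero_iff]
    exact isAcyclicAt_indepCpxOn_of_perfect G hcard (hperfect.1 hne) (by omega)
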